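/- Let i < j < k < l be four indices in {1, …, n}. Then in H_n the following commutation relations hold: (kl)(ij) = q⁶ (ij)(kl); (jk)(il) = (il)(jk); (jl)(ik) = q⁴ (ik)(jl) + (q⁴ − q⁶)(ij)(kl); (jk)(ij) = q⁴ (ij)(jk); (ik)(ij) = q² (ij)(ik); and (jk)(ik) = q² (ik)(jk). -/

import Mathlib

noncomputable section

/-- Generators of the algebra `H q n`: `x i` and `y i` for `i : Fin n`. -/
inductive Gen (n : ℕ) : Type
  | x : Fin n → Gen n
  | y : Fin n → Gen n

open FreeAlgebra in
/-- The defining relations of the braided algebra `H_n`: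
`x_i y_i = q y_i x_i`, and for `i < j`:
`x_j x_i = q² x_i x_j`, `y_j y_i = q² y_i y_j`,
`x_j y_i = q y_i x_j + (q² − 1) x_i y_j`, `y_j x_i = q x_i y_j`. -/
inductive HRel (q : ℂ) (n : ℕ) :
    FreeAlgebra ℂ (Gen n) → FreeAlgebra ℂ (Gen n) → Prop
  | diag (i : Fin n) :
      HRel q n (ι ℂ (Gen.x i) * ι ℂ (Gen.y i)) (q • (ι ℂ (Gen.y i) * ι ℂ (Gen.x i)))
  | xx {i j : Fin n} (h : i < j) :
      HRel q n (ι ℂ (Gen.x j) * ι ℂ (Gen.x i)) ((q ^ 2) • (ι ℂ (Gen.x i) * ι ℂ (Gen.x j)))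
  | yy {i j : Fin n} (h : i < j) :
      HRel q n (ι ℂ (Gen.y j) * ι ℂ (Gen.y i)) ((q ^ 2) • (ι ℂ (Gen.y i) * ι ℂ (Gen.y j)))
  | xy {i j : Fin n} (h : i < j) :
      HRel q n (ι ℂ (Gen.x j) * ι ℂ (Gen.y i))
        (q • (ι ℂ (Gen.y i) * ι ℂ (Gen.x j)) + (q ^ 2 - 1) • (ι ℂ (Gen.x i) * ι ℂ (Gen.y j)))
  | yx {i j : Fin n} (h : i < j) :
      HRel q n (ι ℂ (Gen.y j) * ι ℂ (Gen.x i)) (q • (ι ℂ (Gen.x i) * ι ℂ (Gen.y j)))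

/-- The braided module algebra `H_n`. -/
abbrev H (q : ℂ) (n : ℕ) : Type := RingQuot (HRel q n)

/-- The generator `x i` of `H_n`. -/
def X (q : ℂ) {n : ℕ} (i : Fin n) : H q n :=
  RingQuot.mkAlgHom ℂ (HRel q n) (FreeAlgebra.ι ℂ (Gen.x i))

/-- The generator `y i` of `H_n`. -/
def Y (q : ℂ) {n : ℕ} (i : Fin n) : H q n :=
  RingQuot.mkAlgHom ℂ (HRel q n) (FreeAlgebra.ι ℂ (Gen.y i))

/-- The bracket symbol `(ij) = q^{-1/2} x_i y_j - q^{1/2} y_i x_j`, where `s = q^{1/2}`. -/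
def br (q s : ℂ) {n : ℕ} (i j : Fin n) : H q n :=
  s⁻¹ • (X q i * Y q j) - s • (Y q i * X q j)

section Helpers

variable (q : ℂ) {n : ℕ}

lemma rel_diag (i : Fin n) : X q i * Y q i = q • (Y q i * X q i) := by
  have h := RingQuot.mkAlgHom_rel ℂ (HRel.diag (q := q) i)
  simpa [X, Y, map_mul] using h

lemma rel_xx {i j : Fin n} (h : i < j) :
    X q j * X q i = (q ^ 2) • (X q i * X q j) := by
  have h' := RingQuot.mkAlgHom_rel ℂ (HRel.xx (q := q) h)
  simpa [X, map_mul] using h'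

lemma rel_yy {i j : Fin n} (h : i < j) :
    Y q j * Y q i = (q ^ 2) • (Y q i * Y q j) := by
  have h' := RingQuot.mkAlgHom_rel ℂ (HRel.yy (q := q) h)
  simpa [Y, map_mul] using h'

lemma rel_xy {i j : Fin n} (h : i < j) :
    X q j * Y q i = q • (Y q i * X q j) + (q ^ 2 - 1) • (X q i * Y q j) := by
  have h' := RingQuot.mkAlgHom_rel ℂ (HRel.xy (q := q) h)
  simpa [X, Y, map_mul] using h'

lemma rel_yx {i j : Fin n} (h : i < j) :
    Y q j * X q i = q • (X q i * Y q j) := by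
  have h' := RingQuot.mkAlgHom_rel ℂ (HRel.yx (q := q) h)
  simpa [X, Y, map_mul] using h'

lemma pad_diag (i : Fin n) (z : H q n) :
    X q i * (Y q i * z) = q • (Y q i * (X q i * z)) := by
  rw [← mul_assoc, rel_diag, smul_mul_assoc, mul_assoc]

lemma pad_xx {i j : Fin n} (h : i < j) (z : H q n) :
    X q j * (X q i * z) = (q ^ 2) • (X q i * (X q j * z)) := by
  rw [← mul_assoc, rel_xx q h, smul_mul_assoc, mul_assoc]

lemma pad_yy {i j : Fin n} (h : i < j) (z : H q n) :
    Y q j * (Y q i * z) = (q ^ 2) • (Y q i * (Y q j * z)) := by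
  rw [← mul_assoc, rel_yy q h, smul_mul_assoc, mul_assoc]

lemma pad_xy {i j : Fin n} (h : i < j) (z : H q n) :
    X q j * (Y q i * z) =
      q • (Y q i * (X q j * z)) + (q ^ 2 - 1) • (X q i * (Y q j * z)) := by
  rw [← mul_assoc, rel_xy q h, add_mul, smul_mul_assoc, smul_mul_assoc, mul_assoc, mul_assoc]

lemma pad_yx {i j : Fin n} (h : i < j) (z : H q n) :
    Y q j * (X q i * z) = q • (X q i * (Y q j * z)) := by
  rw [← mul_assoc, rel_yx q h, smul_mul_assoc, mul_assoc]

end Helpers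

set_option maxHeartbeats 4000000 in
/-- **Proposition 3.2 (i).** Commutation relations between brackets. -/
theorem stmt4 (q s : ℂ) (hq : ‖q‖ = 1) (hq1 : q ≠ 1) (hq2 : q ≠ -1)
    (hq3 : q ≠ Complex.I) (hq4 : q ≠ -Complex.I) (hs : s ^ 2 = q)
    (n : ℕ) (hn : 1 ≤ n) (i j k l : Fin n) (hij : i < j) (hjk : j < k) (hkl : k < l) :
    br q s k l * br q s i j = (q ^ 6) • (br q s i j * br q s k l) ∧
    br q s j k * br q s i l = br q s i l * br q s j k ∧
    br q s j l * br q s i k =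
      (q ^ 4) • (br q s i k * br q s j l) + (q ^ 4 - q ^ 6) • (br q s i j * br q s k l) ∧
    br q s j k * br q s i j = (q ^ 4) • (br q s i j * br q s j k) ∧
    br q s i k * br q s i j = (q ^ 2) • (br q s i j * br q s i k) ∧
    br q s j k * br q s i k = (q ^ 2) • (br q s i k * br q s j k) := by
  have hq0 : q ≠ 0 := by
    intro h; rw [h] at hq; simp at hq
  have hs0 : s ≠ 0 := by
    intro h; rw [h] at hs; simp at hs; exact hq0 hs.symm
  have hik : i < k := hij.trans hjk
  have hil : i < l := hik.trans hkl
  have hjl : j < l := hjk.trans hkl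
  subst hs
  refine ⟨?_, ?_, ?_, ?_, ?_, ?_⟩ <;>
  · unfold br
    simp only [sub_mul, mul_sub, smul_sub, smul_mul_assoc, mul_smul_comm, smul_smul,
      smul_add, mul_add, add_mul, mul_assoc,
      pad_diag _ i, pad_diag _ j, pad_diag _ k, pad_diag _ l,
      rel_diag _ i, rel_diag _ j, rel_diag _ k, rel_diag _ l,
      pad_xx _ hij, pad_xx _ hik, pad_xx _ hil, pad_xx _ hjk, pad_xx _ hjl, pad_xx _ hkl,
      rel_xx _ hij, rel_xx _ hik, rel_xx _ hil, rel_xx _ hjk, rel_xx _ hjl, rel_xx _ hkl,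
      pad_yy _ hij, pad_yy _ hik, pad_yy _ hil, pad_yy _ hjk, pad_yy _ hjl, pad_yy _ hkl,
      rel_yy _ hij, rel_yy _ hik, rel_yy _ hil, rel_yy _ hjk, rel_yy _ hjl, rel_yy _ hkl,
      pad_xy _ hij, pad_xy _ hik, pad_xy _ hil, pad_xy _ hjk, pad_xy _ hjl, pad_xy _ hkl,
      rel_xy _ hij, rel_xy _ hik, rel_xy _ hil, rel_xy _ hjk, rel_xy _ hjl, rel_xy _ hkl,
      pad_yx _ hij, pad_yx _ hik, pad_yx _ hil, pad_yx _ hjk, pad_yx _ hjl, pad_yx _ hkl,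
      rel_yx _ hij, rel_yx _ hik, rel_yx _ hil, rel_yx _ hjk, rel_yx _ hjl, rel_yx _ hkl]
    match_scalars <;> field_simp <;> ring
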